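/- For s > 0 set τ_s(p) := (|p|² − s^{−2})₊, and for k ∈ ℝ³ define F₁(k) := (2π)^{−3} ∫_{ℝ³} τ_s(p) | χ̂(p−k) − θ̂(k) χ̂(p) |² dp, where θ̂(k) := ∫_{[−1/2,1/2]³} e^{−ik·x} dx. There exists C > 0 (depending only on χ) such that for all s ∈ (0,1] and all k ∈ ℝ³ with |k| ≤ (2s)^{−1}: 0 ≤ F₁(k) ≤ C s |k|². -/

import Mathlib

noncomputable section
open MeasureTheory Real RealInnerProductSpace

/-- ℝ³ as a Euclidean space. -/
abbrev R3 := EuclideanSpace ℝ (Fin 3)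

/-- The closed unit cube [−1/2,1/2]³. -/
def unitCube : Set R3 := {x : R3 | ∀ i, x i ∈ Set.Icc (-(1/2) : ℝ) (1/2)}

/-- Fourier transform `ĥ(p) = ∫ h(x) e^{−ip·x} dx` of a real function on ℝ³. -/
def ft (h : R3 → ℝ) (p : R3) : ℂ :=
  ∫ x : R3, (h x : ℂ) * Complex.exp (-(Complex.I * (⟪p, x⟫ : ℂ)))

/-- `θ̂(k) = ∫_{[−1/2,1/2]³} e^{−ik·x} dx`. -/
def thetaHat (k : R3) : ℂ := ∫ x in unitCube, Complex.exp (-(Complex.I * (⟪k, x⟫ : ℂ)))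

/-- The cut-off kinetic symbol `τ_s(p) = (|p|² − s⁻²)₊`. -/
def tau (s : ℝ) (p : R3) : ℝ := max (‖p‖ ^ 2 - s ^ (-2 : ℤ)) 0

/-- `F₁(k) := (2π)⁻³ ∫ τ_s(p) |χ̂(p−k) − θ̂(k)χ̂(p)|² dp`. -/
def F1 (χ : R3 → ℝ) (s : ℝ) (k : R3) : ℝ :=
  (2 * π) ^ (-3 : ℤ) *
    ∫ p : R3, tau s p * ‖ft χ (p - k) - thetaHat k * ft χ p‖ ^ 2

open scoped FourierTransform

/-! ### Auxiliary lemmas -/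

lemma norm_exp_I_mul_sub_one (t : ℝ) : ‖Complex.exp (-(Complex.I * t)) - 1‖ ≤ |t| := by
  have h : Complex.exp (-(Complex.I * (t:ℂ))) = Complex.cos (-t) + Complex.sin (-t) * Complex.I := by
    rw [← Complex.exp_mul_I]; ring_nf
  rw [h]
  have : Complex.cos (-(t:ℂ)) + Complex.sin (-(t:ℂ)) * Complex.I - 1
      = ((Real.cos (-t) - 1 : ℝ) : ℂ) + ((Real.sin (-t) : ℝ)) * Complex.I := by
    push_cast; ring
  rw [this, Complex.norm_add_mul_I]
  rw [show |t| = Real.sqrt (t^2) by rw [Real.sqrt_sq_eq_abs]]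
  apply Real.sqrt_le_sqrt
  have h1 := Real.one_sub_sq_div_two_le_cos (x := -t)
  have h2 := Real.sin_sq_add_cos_sq (-t)
  nlinarith [sq_nonneg t]

lemma isClosed_unitCube : IsClosed unitCube := by
  have : unitCube = ⋂ i, (fun x : R3 => x i) ⁻¹' Set.Icc (-(1/2) : ℝ) (1/2) := by
    ext x; simp [unitCube]
  rw [this]
  exact isClosed_iInter fun i => isClosed_Icc.preimage (EuclideanSpace.proj i).continuous

lemma norm_le_one_of_mem_unitCube {x : R3} (hx : x ∈ unitCube) : ‖x‖ ≤ 1 := by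
  rw [EuclideanSpace.norm_eq]
  have : ∑ i, ‖x i‖ ^ 2 ≤ 3/4 := by
    have : ∀ i, ‖x i‖ ^ 2 ≤ 1/4 := by
      intro i
      have h := hx i
      rw [Real.norm_eq_abs, sq_abs]
      nlinarith [h.1, h.2]
    calc ∑ i, ‖x i‖ ^ 2 ≤ ∑ _i : Fin 3, (1/4 : ℝ) := Finset.sum_le_sum fun i _ => this i
    _ = 3/4 := by simp; norm_num
  calc Real.sqrt (∑ i, ‖x i‖ ^ 2) ≤ Real.sqrt 1 := Real.sqrt_le_sqrt (by linarith)
  _ = 1 := Real.sqrt_one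

lemma isCompact_unitCube : IsCompact unitCube := by
  apply Metric.isCompact_of_isClosed_isBounded isClosed_unitCube
  apply Bornology.IsBounded.subset (Metric.isBounded_closedBall (x := (0:R3)) (r := 1))
  intro x hx
  simpa [Metric.mem_closedBall, dist_eq_norm] using norm_le_one_of_mem_unitCube hx

lemma volume_unitCube : volume unitCube = 1 := by
  have h : unitCube = (MeasurableEquiv.toLp 2 (Fin 3 → ℝ)).symm ⁻¹'
      (Set.univ.pi fun _ => Set.Icc (-(1/2) : ℝ) (1/2)) := by
    ext x
    simp only [Set.mem_preimage, Set.mem_univ_pi]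
    exact Iff.rfl
  rw [h, (EuclideanSpace.volume_preserving_symm_measurableEquiv_toLp (Fin 3)).measure_preimage
    ((MeasurableSet.univ_pi fun _ => measurableSet_Icc).nullMeasurableSet)]
  rw [volume_pi_pi]
  simp [Real.volume_Icc]
  norm_num

lemma norm_one_sub_thetaHat (k : R3) : ‖1 - thetaHat k‖ ≤ ‖k‖ := by
  have hvol : (volume unitCube).toReal = 1 := by rw [volume_unitCube]; simp
  have hone : (1 : ℂ) = ∫ _x in unitCube, (1 : ℂ) := by
    rw [setIntegral_const, measureReal_def, hvol]; simp
  have hcont : Continuous fun x : R3 => Complex.exp (-(Complex.I * (⟪k, x⟫ : ℂ))) := by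
    apply Complex.continuous_exp.comp
    apply Continuous.neg
    exact (continuous_const.mul ((Complex.continuous_ofReal.comp
      ((continuous_const.inner continuous_id')))))
  have hint : IntegrableOn (fun x : R3 => Complex.exp (-(Complex.I * (⟪k, x⟫ : ℂ))))
      unitCube := hcont.locallyIntegrable.integrableOn_isCompact isCompact_unitCube
  have h1 : (1:ℂ) - thetaHat k
      = ∫ x in unitCube, ((1:ℂ) - Complex.exp (-(Complex.I * (⟪k, x⟫ : ℂ)))) := by
    rw [integral_sub (μ := volume.restrict unitCube) (f := fun _ => (1:ℂ))
      (g := fun x : R3 => Complex.exp (-(Complex.I * (⟪k, x⟫ : ℂ)))) (integrableOn_const (by rw [volume_unitCube]; norm_num) (by simp) :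
      IntegrableOn (fun _ : R3 => (1:ℂ)) unitCube volume).integrable hint.integrable]
    rw [← hone]; rfl
  rw [h1]
  have hμ : volume unitCube < ⊤ := by rw [volume_unitCube]; norm_num
  calc ‖∫ x in unitCube, ((1:ℂ) - Complex.exp (-(Complex.I * (⟪k, x⟫ : ℂ))))‖
      ≤ ‖k‖ * (volume unitCube).toReal := by
        apply norm_setIntegral_le_of_norm_le_const hμ ?_
        intro x hx
        rw [norm_sub_rev]
        calc ‖Complex.exp (-(Complex.I * (⟪k, x⟫ : ℂ))) - 1‖ ≤ |⟪k, x⟫| :=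
              norm_exp_I_mul_sub_one _
          _ ≤ ‖k‖ * ‖x‖ := abs_real_inner_le_norm k x
          _ ≤ ‖k‖ * 1 := by
              have := norm_le_one_of_mem_unitCube hx
              exact mul_le_mul_of_nonneg_left this (norm_nonneg k)
          _ = ‖k‖ := mul_one _
    _ = ‖k‖ := by rw [hvol, mul_one]

/-- Construct a Schwartz map from a smooth compactly supported function. -/
def toSchwartz (f : R3 → ℂ) (hf : ContDiff ℝ (⊤ : ℕ∞) f) (h : HasCompactSupport f) :
    SchwartzMap R3 ℂ where
  toFun := f
  smooth' := hf.of_le (by simp)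
  decay' := by
    intro k n
    have hcs : HasCompactSupport (fun x : R3 => ‖x‖ ^ k * ‖iteratedFDeriv ℝ n f x‖) :=
      ((h.iteratedFDeriv n).norm).mul_left
    obtain ⟨C, hC⟩ := hcs.exists_bound_of_continuous
      ((continuous_norm.pow k).mul ((hf.continuous_iteratedFDeriv (by exact_mod_cast le_top)).norm))
    refine ⟨C, fun x => ?_⟩
    simpa [Real.norm_eq_abs, abs_of_nonneg (mul_nonneg (pow_nonneg (norm_nonneg x) k)
      (norm_nonneg _))] using hC x

lemma ft_eq_fourier (χ : R3 → ℝ) (S : SchwartzMap R3 ℂ) (hS : ∀ x, S x = (χ x : ℂ)) (p : R3) :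
    ft χ p = 𝓕 (⇑S) ((2 * π)⁻¹ • p) := by
  rw [Real.fourier_eq', ft]
  congr 1
  funext v
  rw [hS v, smul_eq_mul]
  rw [real_inner_smul_right]
  have h2π : (2 * π : ℝ) ≠ 0 := by positivity
  have h1 : (-2 * π * ((2 * π)⁻¹ * ⟪v, p⟫) : ℝ) = -⟪p, v⟫ := by
    rw [real_inner_comm]; field_simp
  rw [h1, mul_comm]
  congr 2
  push_cast
  ring

lemma norm_fderiv_le_iteratedFDeriv_one (f : R3 → ℂ) (x : R3) :
    ‖fderiv ℝ f x‖ ≤ ‖iteratedFDeriv ℝ 1 f x‖ := by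
  apply ContinuousLinearMap.opNorm_le_bound _ (norm_nonneg _)
  intro v
  have h : fderiv ℝ f x v = iteratedFDeriv ℝ 1 f x (fun _ => v) := by
    rw [iteratedFDeriv_one_apply]
  rw [h]
  calc ‖iteratedFDeriv ℝ 1 f x (fun _ => v)‖
      ≤ ‖iteratedFDeriv ℝ 1 f x‖ * ∏ _i : Fin 1, ‖v‖ :=
        (iteratedFDeriv ℝ 1 f x).le_opNorm _
    _ = ‖iteratedFDeriv ℝ 1 f x‖ * ‖v‖ := by simp

lemma one_add_pow_four_le (t : ℝ) (_ht : 0 ≤ t) : (1 + t) ^ 4 ≤ 8 * (1 + t ^ 4) := by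
  nlinarith [sq_nonneg (t - 1), sq_nonneg (t ^ 2 - 1), sq_nonneg (t ^ 2 - t), sq_nonneg t,
    sq_nonneg (t^2 + t - 2)]

/-- Uniform decay of a Schwartz function and its derivative at rate `(1+‖w‖)⁻⁴`. -/
lemma schwartz_decay4 (G : SchwartzMap R3 ℂ) :
    ∃ D : ℝ, 0 ≤ D ∧ ∀ w : R3, ‖G w‖ ≤ D / (1 + ‖w‖) ^ 4 ∧
      ‖fderiv ℝ (⇑G) w‖ ≤ D / (1 + ‖w‖) ^ 4 := by
  obtain ⟨C0, hC0p, hC0⟩ := G.decay 0 0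
  obtain ⟨C4, hC4p, hC4⟩ := G.decay 4 0
  obtain ⟨C0', hC0'p, hC0'⟩ := G.decay 0 1
  obtain ⟨C4', hC4'p, hC4'⟩ := G.decay 4 1
  refine ⟨16 * (C0 + C4 + C0' + C4'), by positivity, fun w => ?_⟩
  have hw : (0:ℝ) < (1 + ‖w‖) ^ 4 := by positivity
  have hkey : ∀ n : ℕ, (‖iteratedFDeriv ℝ n (⇑G) w‖ ≤ C0 + C4 + C0' + C4' →
      ‖w‖ ^ 4 * ‖iteratedFDeriv ℝ n (⇑G) w‖ ≤ C0 + C4 + C0' + C4' →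
      (1 + ‖w‖) ^ 4 * ‖iteratedFDeriv ℝ n (⇑G) w‖ ≤ 16 * (C0 + C4 + C0' + C4')) := by
    intro n h1 h2
    calc (1 + ‖w‖) ^ 4 * ‖iteratedFDeriv ℝ n (⇑G) w‖
        ≤ 8 * (1 + ‖w‖ ^ 4) * ‖iteratedFDeriv ℝ n (⇑G) w‖ := by
          apply mul_le_mul_of_nonneg_right (one_add_pow_four_le _ (norm_nonneg w)) (norm_nonneg _)
      _ = 8 * (‖iteratedFDeriv ℝ n (⇑G) w‖ + ‖w‖ ^ 4 * ‖iteratedFDeriv ℝ n (⇑G) w‖) := by ring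
      _ ≤ 8 * (C0 + C4 + C0' + C4' + (C0 + C4 + C0' + C4')) := by
          have hn : 0 ≤ ‖iteratedFDeriv ℝ n (⇑G) w‖ := norm_nonneg _
          nlinarith
      _ = 16 * (C0 + C4 + C0' + C4') := by ring
  constructor
  · have h0 : ‖G w‖ = ‖iteratedFDeriv ℝ 0 (⇑G) w‖ := (norm_iteratedFDeriv_zero).symm
    rw [h0, le_div_iff₀ hw, mul_comm]
    apply hkey 0
    · simpa using (hC0 w).trans (by linarith)
    · exact (hC4 w).trans (by linarith)
  · have h1' : ‖fderiv ℝ (⇑G) w‖ ≤ ‖iteratedFDeriv ℝ 1 (⇑G) w‖ :=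
      norm_fderiv_le_iteratedFDeriv_one _ w
    rw [le_div_iff₀ hw, mul_comm]
    calc (1 + ‖w‖) ^ 4 * ‖fderiv ℝ (⇑G) w‖
        ≤ (1 + ‖w‖) ^ 4 * ‖iteratedFDeriv ℝ 1 (⇑G) w‖ :=
          mul_le_mul_of_nonneg_left h1' (le_of_lt hw)
      _ ≤ 16 * (C0 + C4 + C0' + C4') := by
          apply hkey 1
          · simpa using (hC0' w).trans (by linarith)
          · exact (hC4' w).trans (by linarith)

lemma schwartz_diff_bound (G : SchwartzMap R3 ℂ) (D : ℝ) (hD0 : 0 ≤ D)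
    (hD : ∀ w : R3, ‖fderiv ℝ (⇑G) w‖ ≤ D / (1 + ‖w‖) ^ 4)
    (p k : R3) (hpk : 2 * ‖k‖ ≤ ‖p‖) :
    ‖G ((2 * π)⁻¹ • p) - G ((2 * π)⁻¹ • (p - k))‖ ≤
      (4 * π) ^ 4 * D * ‖k‖ / (1 + ‖p‖) ^ 4 := by
  set a := (2 * π)⁻¹ • (p - k) with ha
  set b := (2 * π)⁻¹ • p with hb
  have hπ : (1:ℝ) ≤ 2 * π := by nlinarith [Real.pi_gt_three]
  have hπ0 : (0:ℝ) < 2 * π := by linarith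
  have hp4 : (0:ℝ) < (1 + ‖p‖) ^ 4 := by positivity
  have hqbound : ∀ q ∈ segment ℝ a b, ‖fderiv ℝ (⇑G) q‖ ≤
      (4 * π) ^ 4 * D / (1 + ‖p‖) ^ 4 := by
    intro q hq
    rw [segment_eq_image] at hq
    obtain ⟨t, ht, rfl⟩ := hq
    have hq_eq : (1 - t) • a + t • b = (2 * π)⁻¹ • (p - (1 - t) • k) := by
      rw [ha, hb]; module
    have hqn : (2 * π)⁻¹ * (‖p‖ - ‖k‖) ≤ ‖(1 - t) • a + t • b‖ := by
      rw [hq_eq, norm_smul]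
      have h1 : ‖p‖ - ‖k‖ ≤ ‖p - (1 - t) • k‖ := by
        have h2 : ‖(1 - t) • k‖ ≤ ‖k‖ := by
          rw [norm_smul, Real.norm_eq_abs]
          have : |1 - t| ≤ 1 := by rw [abs_le]; constructor <;> [linarith [ht.2]; linarith [ht.1]]
          nlinarith [norm_nonneg k]
        calc ‖p‖ - ‖k‖ ≤ ‖p‖ - ‖(1 - t) • k‖ := by linarith
          _ ≤ ‖p - (1 - t) • k‖ := by
              have := norm_sub_norm_le p ((1 - t) • k); linarith
      have : ‖(2 * π : ℝ)⁻¹‖ = (2 * π)⁻¹ := by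
        rw [Real.norm_eq_abs, abs_of_pos (by positivity)]
      rw [this]
      apply mul_le_mul_of_nonneg_left h1 (by positivity)
    set q := (1 - t) • a + t • b
    have hq4 : (1 + ‖p‖) / (4 * π) ≤ 1 + ‖q‖ := by
      have h3 : ‖p‖ - ‖k‖ ≤ 2 * π * ‖q‖ := by
        calc ‖p‖ - ‖k‖ = 2 * π * ((2*π)⁻¹ * (‖p‖ - ‖k‖)) := by field_simp
          _ ≤ 2 * π * ‖q‖ := mul_le_mul_of_nonneg_left hqn (le_of_lt hπ0)
      have h4 : ‖p‖ / 2 ≤ 2 * π * ‖q‖ := by linarith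
      rw [div_le_iff₀ (by positivity)]
      nlinarith [norm_nonneg q, norm_nonneg p]
    calc ‖fderiv ℝ (⇑G) q‖ ≤ D / (1 + ‖q‖) ^ 4 := hD q
      _ ≤ D / ((1 + ‖p‖) / (4 * π)) ^ 4 := by
          apply div_le_div_of_nonneg_left hD0 (by positivity)
          · apply pow_le_pow_left₀ (by positivity) hq4
      _ = (4 * π) ^ 4 * D / (1 + ‖p‖) ^ 4 := by
          rw [div_pow]
          rw [div_div_eq_mul_div]
          ring
  have hmv := (convex_segment a b).norm_image_sub_le_of_norm_fderiv_le
    (fun x _ => G.differentiable.differentiableAt) hqbound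
    (left_mem_segment ℝ a b) (right_mem_segment ℝ a b)
  have hba : ‖b - a‖ ≤ ‖k‖ := by
    rw [ha, hb, ← smul_sub, sub_sub_cancel, norm_smul, Real.norm_eq_abs,
      abs_of_pos (by positivity : (0:ℝ) < (2*π)⁻¹)]
    have h5 : (2 * π : ℝ)⁻¹ ≤ 1 := by
      have h6 := inv_mul_cancel₀ (ne_of_gt hπ0)
      nlinarith [mul_le_mul_of_nonneg_left hπ (inv_nonneg.mpr (le_of_lt hπ0))]
    nlinarith [norm_nonneg k]
  calc ‖G b - G a‖ ≤ (4 * π) ^ 4 * D / (1 + ‖p‖) ^ 4 * ‖b - a‖ := hmv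
    _ ≤ (4 * π) ^ 4 * D / (1 + ‖p‖) ^ 4 * ‖k‖ := by
        apply mul_le_mul_of_nonneg_left hba (by positivity)
    _ = (4 * π) ^ 4 * D * ‖k‖ / (1 + ‖p‖) ^ 4 := by ring

lemma integrable_dominator : Integrable (fun p : R3 => ((1 + ‖p‖) ^ 4)⁻¹) := by
  have h := integrable_one_add_norm (E := R3) (μ := volume) (r := 4)
    (by rw [finrank_euclideanSpace_fin]; norm_num)
  apply h.congr
  filter_upwards with x
  rw [Real.rpow_neg (by positivity)]
  norm_num

set_option maxHeartbeats 2000000 in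
/-- for `s ∈ (0,1]` and `|k| ≤ (2s)⁻¹` one has `0 ≤ F₁(k) ≤ C s |k|²`. -/
theorem F1_Taylor_bound
    (χ : R3 → ℝ) (hχ_smooth : ContDiff ℝ (⊤ : ℕ∞) χ) (hχ_even : ∀ x, χ (-x) = χ x)
    (hχ_nonneg : ∀ x, 0 ≤ χ x) (hχ_supp : Function.support χ ⊆ unitCube)
    (hχ_norm : ∫ x : R3, (χ x) ^ 2 = 1) :
    ∃ C > 0, ∀ s : ℝ, s ∈ Set.Ioc (0 : ℝ) 1 → ∀ k : R3, ‖k‖ ≤ (2 * s)⁻¹ →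
      0 ≤ F1 χ s k ∧ F1 χ s k ≤ C * s * ‖k‖ ^ 2 := by
  have hπ : (1:ℝ) ≤ 2 * π := by nlinarith [Real.pi_gt_three]
  have hπ0 : (0:ℝ) < 2 * π := by linarith
  -- the Schwartz map associated to χ
  have hfC : ContDiff ℝ (⊤ : ℕ∞) (fun x : R3 => (χ x : ℂ)) :=
    Complex.ofRealCLM.contDiff.comp hχ_smooth
  have hsupp : Function.support (fun x : R3 => (χ x : ℂ)) ⊆ unitCube := by
    intro x hx
    apply hχ_supp
    simpa [Function.mem_support, Complex.ofReal_eq_zero] using hx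
  have hcs : HasCompactSupport (fun x : R3 => (χ x : ℂ)) :=
    IsCompact.of_isClosed_subset isCompact_unitCube isClosed_closure
      (closure_minimal hsupp isClosed_unitCube)
  obtain ⟨S, hS⟩ : ∃ S : SchwartzMap R3 ℂ, ∀ x, S x = (χ x : ℂ) :=
    ⟨toSchwartz (fun x : R3 => (χ x : ℂ)) hfC hcs, fun x => rfl⟩
  obtain ⟨G, hG⟩ : ∃ G : SchwartzMap R3 ℂ, ⇑G = 𝓕 (⇑S) :=
    ⟨SchwartzMap.fourierTransformCLM ℝ S, rfl⟩
  have hftG : ∀ q : R3, ft χ q = G ((2 * π)⁻¹ • q) := by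
    intro q
    rw [ft_eq_fourier χ S hS q, ← hG]
  obtain ⟨D, hD0, hDb⟩ := schwartz_decay4 G
  set CA : ℝ := (4 * π) ^ 4 * D with hCA
  set CB : ℝ := (2 * π) ^ 4 * D with hCB
  have hCA0 : 0 ≤ CA := by positivity
  have hCB0 : 0 ≤ CB := by positivity
  set K : ℝ := (CA + CB) ^ 2 with hK
  have hK0 : 0 ≤ K := sq_nonneg _
  set J : ℝ := ∫ p : R3, ((1 + ‖p‖) ^ 4)⁻¹ with hJ
  have hJ0 : 0 ≤ J := integral_nonneg fun p => by positivity
  have hc3 : (0:ℝ) ≤ (2 * π) ^ (-3 : ℤ) := by positivity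
  have hC0 : (0:ℝ) ≤ (2 * π) ^ (-3 : ℤ) * (K * J) := mul_nonneg hc3 (mul_nonneg hK0 hJ0)
  refine ⟨(2 * π) ^ (-3 : ℤ) * (K * J) + 1, by linarith, fun s hs k hk => ?_⟩
  obtain ⟨hs0, hs1⟩ := hs
  have hFnonneg : 0 ≤ F1 χ s k := by
    apply mul_nonneg hc3
    apply integral_nonneg
    intro p
    exact mul_nonneg (le_max_right _ _) (by positivity)
  refine ⟨hFnonneg, ?_⟩
  -- the pointwise bound
  have hbound : ∀ p : R3, tau s p * ‖ft χ (p - k) - thetaHat k * ft χ p‖ ^ 2 ≤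
      K * s * ‖k‖ ^ 2 * ((1 + ‖p‖) ^ 4)⁻¹ := by
    intro p
    by_cases hp : ‖p‖ ≤ s⁻¹
    · -- here τ_s(p) = 0
      have h1 : ‖p‖ ^ 2 - s ^ (-2 : ℤ) ≤ 0 := by
        have h2 : s ^ (-2 : ℤ) = (s⁻¹) ^ 2 := by
          rw [zpow_neg, zpow_two, sq, mul_inv]
        rw [h2]
        have := pow_le_pow_left₀ (norm_nonneg p) hp 2
        linarith
      have : tau s p = 0 := max_eq_right h1
      rw [this, zero_mul]
      positivity
    · push_neg at hp
      have hsinv : (0:ℝ) < s⁻¹ := by positivity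
      have hp0 : (0:ℝ) < ‖p‖ := lt_trans hsinv hp
      have hp1 : (0:ℝ) < 1 + ‖p‖ := by linarith
      -- τ_s(p) ≤ (1+‖p‖)²
      have htau : tau s p ≤ (1 + ‖p‖) ^ 2 := by
        apply max_le _ (by positivity)
        have : (0:ℝ) ≤ s ^ (-2 : ℤ) := by positivity
        nlinarith [norm_nonneg p]
      -- 2‖k‖ ≤ ‖p‖
      have hk2 : 2 * ‖k‖ ≤ ‖p‖ := by
        have : ‖k‖ ≤ (2 * s)⁻¹ := hk
        have h3 : (2 * s)⁻¹ = s⁻¹ / 2 := by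
          rw [mul_inv]; ring
        rw [h3] at this
        linarith
      -- bound on the difference term
      have hA : ‖ft χ (p - k) - ft χ p‖ ≤ CA * ‖k‖ / (1 + ‖p‖) ^ 4 := by
        rw [hftG (p - k), hftG p, norm_sub_rev]
        exact schwartz_diff_bound G D hD0 (fun w => (hDb w).2) p k hk2
      -- bound on ‖ft χ p‖
      have hBft : ‖ft χ p‖ ≤ CB / (1 + ‖p‖) ^ 4 := by
        rw [hftG p]
        have h1 : ‖G ((2 * π)⁻¹ • p)‖ ≤ D / (1 + ‖(2 * π)⁻¹ • p‖) ^ 4 := (hDb _).1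
        have h2 : (1 + ‖p‖) / (2 * π) ≤ 1 + ‖(2 * π)⁻¹ • p‖ := by
          rw [norm_smul, Real.norm_eq_abs, abs_of_pos (by positivity : (0:ℝ) < (2*π)⁻¹)]
          rw [div_le_iff₀ hπ0]
          have : (2 * π) * ((2 * π)⁻¹ * ‖p‖) = ‖p‖ := by field_simp
          nlinarith [norm_nonneg p]
        calc ‖G ((2 * π)⁻¹ • p)‖ ≤ D / (1 + ‖(2 * π)⁻¹ • p‖) ^ 4 := h1
          _ ≤ D / ((1 + ‖p‖) / (2 * π)) ^ 4 := by
              apply div_le_div_of_nonneg_left hD0 (by positivity)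
              apply pow_le_pow_left₀ (by positivity) h2
          _ = CB / (1 + ‖p‖) ^ 4 := by
              rw [hCB, div_pow, div_div_eq_mul_div]
              ring
      -- bound on the full symbol
      have hg : ‖ft χ (p - k) - thetaHat k * ft χ p‖ ≤ (CA + CB) * ‖k‖ / (1 + ‖p‖) ^ 4 := by
        have hdec : ft χ (p - k) - thetaHat k * ft χ p
            = (ft χ (p - k) - ft χ p) + (1 - thetaHat k) * ft χ p := by ring
        rw [hdec]
        calc ‖(ft χ (p - k) - ft χ p) + (1 - thetaHat k) * ft χ p‖
            ≤ ‖ft χ (p - k) - ft χ p‖ + ‖(1 - thetaHat k) * ft χ p‖ := norm_add_le _ _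
          _ ≤ CA * ‖k‖ / (1 + ‖p‖) ^ 4 + ‖k‖ * (CB / (1 + ‖p‖) ^ 4) := by
              apply add_le_add hA
              rw [norm_mul]
              exact mul_le_mul (norm_one_sub_thetaHat k) hBft (norm_nonneg _) (norm_nonneg _)
          _ = (CA + CB) * ‖k‖ / (1 + ‖p‖) ^ 4 := by ring
      have hgsq : ‖ft χ (p - k) - thetaHat k * ft χ p‖ ^ 2 ≤
          K * ‖k‖ ^ 2 / ((1 + ‖p‖) ^ 4) ^ 2 := by
        have := pow_le_pow_left₀ (norm_nonneg _) hg 2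
        calc ‖ft χ (p - k) - thetaHat k * ft χ p‖ ^ 2
            ≤ ((CA + CB) * ‖k‖ / (1 + ‖p‖) ^ 4) ^ 2 := this
          _ = K * ‖k‖ ^ 2 / ((1 + ‖p‖) ^ 4) ^ 2 := by
              rw [div_pow, mul_pow, ← hK]
      -- (1+‖p‖)⁻² ≤ s² ≤ s
      have hs2 : ((1 + ‖p‖) ^ 2)⁻¹ ≤ s := by
        have h4 : s⁻¹ ≤ 1 + ‖p‖ := by linarith
        have h5 : (1:ℝ) ≤ s * (1 + ‖p‖) := by
          calc (1:ℝ) = s * s⁻¹ := by field_simp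
            _ ≤ s * (1 + ‖p‖) := mul_le_mul_of_nonneg_left h4 (le_of_lt hs0)
        have h6 : (1:ℝ) ≤ (s * (1 + ‖p‖)) ^ 2 := by
          calc (1:ℝ) = 1 * 1 := by norm_num
            _ ≤ (s * (1 + ‖p‖)) * (s * (1 + ‖p‖)) :=
                mul_le_mul h5 h5 zero_le_one (zero_le_one.trans h5)
            _ = (s * (1 + ‖p‖)) ^ 2 := (sq _).symm
        rw [inv_le_iff_one_le_mul₀ (by positivity)]
        calc (1:ℝ) ≤ (s * (1 + ‖p‖)) ^ 2 := h6
          _ = s * ((1 + ‖p‖) ^ 2 * s) := by ring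
          _ ≤ 1 * ((1 + ‖p‖) ^ 2 * s) := by
              apply mul_le_mul_of_nonneg_right hs1 (by positivity)
          _ = s * (1 + ‖p‖) ^ 2 := by ring
      have hne : (1 + ‖p‖) ≠ 0 := ne_of_gt hp1
      have hKk : (0:ℝ) ≤ K * ‖k‖ ^ 2 := mul_nonneg hK0 (by positivity)
      have hpow : (1 + ‖p‖) ^ 2 / ((1 + ‖p‖) ^ 4) ^ 2
          = ((1 + ‖p‖) ^ 2)⁻¹ * ((1 + ‖p‖) ^ 4)⁻¹ := by
        field_simp
      calc tau s p * ‖ft χ (p - k) - thetaHat k * ft χ p‖ ^ 2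
          ≤ (1 + ‖p‖) ^ 2 * (K * ‖k‖ ^ 2 / ((1 + ‖p‖) ^ 4) ^ 2) := by
            apply mul_le_mul htau hgsq (by positivity) (by positivity)
        _ = (K * ‖k‖ ^ 2) * ((1 + ‖p‖) ^ 2 / ((1 + ‖p‖) ^ 4) ^ 2) := by ring
        _ = (K * ‖k‖ ^ 2) * (((1 + ‖p‖) ^ 2)⁻¹ * ((1 + ‖p‖) ^ 4)⁻¹) := by rw [hpow]
        _ ≤ (K * ‖k‖ ^ 2) * (s * ((1 + ‖p‖) ^ 4)⁻¹) := by
            apply mul_le_mul_of_nonneg_left _ hKk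
            exact mul_le_mul_of_nonneg_right hs2 (by positivity)
        _ = K * s * ‖k‖ ^ 2 * ((1 + ‖p‖) ^ 4)⁻¹ := by ring
  -- integrate the pointwise bound
  have hdomint : Integrable (fun p : R3 => K * s * ‖k‖ ^ 2 * ((1 + ‖p‖) ^ 4)⁻¹) :=
    integrable_dominator.const_mul _
  have hint : (∫ p : R3, tau s p * ‖ft χ (p - k) - thetaHat k * ft χ p‖ ^ 2)
      ≤ ∫ p : R3, K * s * ‖k‖ ^ 2 * ((1 + ‖p‖) ^ 4)⁻¹ := by
    apply integral_mono_of_nonneg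
    · filter_upwards with p
      exact mul_nonneg (le_max_right _ _) (by positivity)
    · exact hdomint
    · filter_upwards with p
      exact hbound p
  have hintval : (∫ p : R3, K * s * ‖k‖ ^ 2 * ((1 + ‖p‖) ^ 4)⁻¹) = K * s * ‖k‖ ^ 2 * J := by
    rw [hJ, integral_const_mul]
  rw [F1]
  calc (2 * π) ^ (-3 : ℤ) * ∫ p : R3, tau s p * ‖ft χ (p - k) - thetaHat k * ft χ p‖ ^ 2
      ≤ (2 * π) ^ (-3 : ℤ) * (K * s * ‖k‖ ^ 2 * J) := by
        apply mul_le_mul_of_nonneg_left _ hc3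
        rw [← hintval]
        exact hint
    _ = ((2 * π) ^ (-3 : ℤ) * (K * J)) * s * ‖k‖ ^ 2 := by ring
    _ ≤ ((2 * π) ^ (-3 : ℤ) * (K * J) + 1) * s * ‖k‖ ^ 2 := by
        apply mul_le_mul_of_nonneg_right _ (by positivity)
        apply mul_le_mul_of_nonneg_right _ (le_of_lt hs0)
        linarith
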